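/- In the amplitude-damping setup of the context, the quantities β₂ = ∑_{μ,ν} Tr(R_μ R_ν)·Tr(R_μ)·Tr(R_ν), β₃ = ∑_{μ,ν} Tr(R_μ R_ν²)·Tr(R_μ), and β₄ = ∑_{μ,ν} Tr(R_μ² R_ν²) satisfy β₂ = α₁² / d_S, β₃ = α₁·α₂ / d_S, and β₄ = α₂² / d_S, where d_S = C(N,K), α₁ = ∑_μ (Tr R_μ)² and α₂ = ∑_μ Tr(R_μ²). -/

import Mathlib

open Matrix Finset

/-- Amplitude-damping Kraus operator K₁ = |−⟩⟨−| + √(1−r)|+⟩⟨+| on C², where the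
basis index 0 is |−⟩ and 1 is |+⟩. -/
noncomputable def ampK1 (r : ℝ) : Matrix (Fin 2) (Fin 2) ℂ :=
  !![1, 0; 0, (Real.sqrt (1 - r) : ℂ)]

/-- Amplitude-damping Kraus operator K₂ = √r |−⟩⟨+|. -/
noncomputable def ampK2 (r : ℝ) : Matrix (Fin 2) (Fin 2) ℂ :=
  !![0, (Real.sqrt r : ℂ); 0, 0]

/-- The rescaled Pauli matrices σ₀ = (|+⟩⟨+|+|−⟩⟨−|)/√2, σ₁ = (|+⟩⟨−|+|−⟩⟨+|)/√2,
σ₂ = i(−|+⟩⟨−|+|−⟩⟨+|)/√2, σ₃ = (|+⟩⟨+|−|−⟩⟨−|)/√2, with basis index 0 = |−⟩, 1 = |+⟩. -/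
noncomputable def pauliR : Fin 4 → Matrix (Fin 2) (Fin 2) ℂ
  | 0 => ((Real.sqrt 2 : ℂ))⁻¹ • !![1, 0; 0, 1]
  | 1 => ((Real.sqrt 2 : ℂ))⁻¹ • !![0, 1; 1, 0]
  | 2 => ((Real.sqrt 2 : ℂ))⁻¹ • !![0, Complex.I; -Complex.I, 0]
  | 3 => ((Real.sqrt 2 : ℂ))⁻¹ • !![-1, 0; 0, 1]

/-- The single-qubit operators Q_a = ∑_{i=1,2} K_i† σ_a K_i for the
amplitude-damping channel. -/
noncomputable def ampQ (r : ℝ) (a : Fin 4) : Matrix (Fin 2) (Fin 2) ℂ :=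
  (ampK1 r)ᴴ * pauliR a * ampK1 r + (ampK2 r)ᴴ * pauliR a * ampK2 r

/-- The N-qubit operator Q_μ = ⊗_{n=1}^N Q_{μ(n)} (N-fold Kronecker product). -/
noncomputable def ampQN (r : ℝ) (N : ℕ) (μ : Fin N → Fin 4) :
    Matrix (Fin N → Fin 2) (Fin N → Fin 2) ℂ :=
  Matrix.of fun x y => ∏ n, ampQ r (μ n) (x n) (y n)

/-- The orthogonal projection onto the energy shell: the span of the standard
tensor-product basis vectors having exactly K factors equal to |+⟩. -/
noncomputable def shellP (N Kp : ℕ) : Matrix (Fin N → Fin 2) (Fin N → Fin 2) ℂ :=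
  Matrix.of fun x y =>
    if x = y ∧ (Finset.univ.filter fun n => x n = 1).card = Kp then 1 else 0

/-- R_μ = P Q_μ P for the amplitude-damping setup. -/
noncomputable def ampR (r : ℝ) (N Kp : ℕ) (μ : Fin N → Fin 4) :
    Matrix (Fin N → Fin 2) (Fin N → Fin 2) ℂ :=
  shellP N Kp * ampQN r N μ * shellP N Kp

/-- Real part of the trace. -/
noncomputable def rtr {α : Type} [Fintype α] (M : Matrix α α ℂ) : ℝ :=
  (Matrix.trace M).re

/-!
Both `W = ∑_μ Tr(R_μ) R_μ` and `V = ∑_μ R_μ²` are real multiples `w P`, `v P` of the shell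
projection. Granting this, each β is the trace of a product of two of `W`, `V`, for instance
`β₂ = Tr(W²) = w² d_S`, while `α₁ = Tr W = w d_S` and `α₂ = Tr V = v d_S`.

To see that `W` and `V` are scalar on the shell, note that the sum over `μ` factorises over the
sites, and the one-qubit sums `∑_a (Q_a)_{zz} (Q_a)_{xy}` and `∑_a (Q_a)_{xz} (Q_a)_{zy}` vanish for
`x ≠ y`. Hence `W` and `V` are diagonal, with entry at `x` a sum over the shell of
`∏_n F(z_n, x_n)`. This sum is unchanged when the sites are permuted, and the permutations act
transitively on the shell. Finally, the diagonal entries of every `Q_a` are real, so each `Tr R_μ`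
is real and the real parts in the β's can be taken factor by factor.
-/

section
variable {ι κ R : Type*} [Fintype ι] [DecidableEq ι] [Fintype κ] [CommSemiring R]

lemma sum_prod_mul_prod (f g : ι → κ → R) :
    ∑ μ : ι → κ, (∏ i, f i (μ i)) * ∏ i, g i (μ i) = ∏ i, ∑ a, f i a * g i a := by
  simp_rw [← prod_mul_distrib]
  exact (Fintype.prod_sum fun i a => f i a * g i a).symm
end

section
variable {n R : Type*} [Fintype n] [DecidableEq n] [CommSemiring R] (S : Finset n)

lemma diagonal_indicator_mul_self :
    (diagonal fun x => if x ∈ S then (1 : R) else 0) * diagonal (fun x => if x ∈ S then 1 else 0) =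
      diagonal fun x => if x ∈ S then 1 else 0 := by
  rw [diagonal_mul_diagonal]
  congr 1
  ext x
  split_ifs <;> simp

lemma trace_diagonal_indicator :
    trace (diagonal fun x => if x ∈ S then (1 : R) else 0) = #S := by
  simp [trace_diagonal, sum_ite_mem]

lemma trace_diagonal_indicator_mul_mul (M : Matrix n n R) :
    trace ((diagonal fun x => if x ∈ S then (1 : R) else 0) * M *
      diagonal fun x => if x ∈ S then 1 else 0) = ∑ x ∈ S, M x x := by
  simp [trace, mul_diagonal, diagonal_mul, sum_ite_mem]

lemma mul_diagonal_indicator_mul_apply (M M' : Matrix n n R) (x y : n) :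
    (M * (diagonal fun x => if x ∈ S then (1 : R) else 0) * M') x y =
      ∑ z ∈ S, M x z * M' z y := by
  rw [mul_apply]
  simp [mul_diagonal, sum_ite_mem]

lemma diagonal_indicator_mul_diagonal_mul {g : n → R} {c : R} (hg : ∀ x ∈ S, g x = c) :
    (diagonal fun x => if x ∈ S then (1 : R) else 0) * diagonal g *
      diagonal (fun x => if x ∈ S then 1 else 0) =
        c • diagonal fun x => if x ∈ S then 1 else 0 := by
  rw [diagonal_mul_diagonal, diagonal_mul_diagonal, ← diagonal_smul]
  congr 1
  ext x
  by_cases hx : x ∈ S <;> simp [hx, hg]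

omit [DecidableEq n] in
lemma of_sum_prod_ite_eq_diagonal {m α : Type*} [Fintype m] [DecidableEq m] [DecidableEq α]
    (S : Finset (m → α)) (F : α → α → R) :
    (of fun x y : m → α => ∑ z ∈ S, ∏ i, if x i = y i then F (z i) (x i) else 0) =
      diagonal fun x => ∑ z ∈ S, ∏ i, F (z i) (x i) := by
  ext x y
  by_cases h : x = y
  · subst h; simp
  · simp [Fintype.prod_ite_zero, ← funext_iff, h]
end

section
variable {ι n : Type} [Fintype ι] [Fintype n]

lemma rtr_ofReal_smul_mul (a : ℝ) (X Y : Matrix n n ℂ) :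
    rtr ((a : ℂ) • X * Y) = a * rtr (X * Y) := by
  rw [rtr, smul_mul_assoc, trace_smul, smul_eq_mul, Complex.re_ofReal_mul, rtr]

lemma rtr_mul_ofReal_smul (a : ℝ) (X Y : Matrix n n ℂ) :
    rtr (X * (a : ℂ) • Y) = a * rtr (X * Y) := by
  rw [mul_smul_comm, rtr, trace_smul, smul_eq_mul, Complex.re_ofReal_mul, rtr]

lemma sum_sum_rtr_mul (X Y : ι → Matrix n n ℂ) :
    ∑ i, ∑ j, rtr (X i * Y j) = rtr ((∑ i, X i) * ∑ j, Y j) := by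
  simp [rtr, sum_mul_sum, trace_sum, Complex.re_sum]

theorem beta_formulas_of_sum_eq_smul {A : ι → Matrix n n ℂ} {P : Matrix n n ℂ} {w v d : ℝ}
    (hP : P * P = P) (hd : trace P = d) (hA : ∀ i, (rtr (A i) : ℂ) = trace (A i))
    (hW : ∑ i, trace (A i) • A i = (w : ℂ) • P) (hV : ∑ i, A i * A i = (v : ℂ) • P) :
    ∑ i, ∑ j, rtr (A i * A j) * rtr (A i) * rtr (A j) = (∑ i, rtr (A i) ^ 2) ^ 2 / d ∧
    ∑ i, ∑ j, rtr (A i * (A j * A j)) * rtr (A i) =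
      (∑ i, rtr (A i) ^ 2) * (∑ i, rtr (A i * A i)) / d ∧
    ∑ i, ∑ j, rtr (A i * A i * (A j * A j)) = (∑ i, rtr (A i * A i)) ^ 2 / d := by
  replace hW : ∑ i, (rtr (A i) : ℂ) • A i = (w : ℂ) • P := by simpa only [hA] using hW
  have hPP : ∀ a b : ℝ, rtr ((a : ℂ) • P * (b : ℂ) • P) = a * b * d := fun a b => by
    rw [rtr_ofReal_smul_mul, rtr_mul_ofReal_smul, hP, rtr, hd, Complex.ofReal_re, mul_assoc]
  have hα₁ : ∑ i, rtr (A i) ^ 2 = w * d := by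
    have h := congrArg rtr hW
    simpa [rtr, Complex.re_sum, hd, sq] using h
  have hα₂ : ∑ i, rtr (A i * A i) = v * d := by
    have h := congrArg rtr hV
    simpa [rtr, Complex.re_sum, hd] using h
  have hβ₂ : ∑ i, ∑ j, rtr (A i * A j) * rtr (A i) * rtr (A j) = w * w * d := by
    calc _ = ∑ i, ∑ j, rtr ((rtr (A i) : ℂ) • A i * (rtr (A j) : ℂ) • A j) := by
            simp only [rtr_ofReal_smul_mul, rtr_mul_ofReal_smul]
            exact sum_congr rfl fun i _ => sum_congr rfl fun j _ => by ring
      _ = w * w * d := by rw [sum_sum_rtr_mul, hW, hPP]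
  have hβ₃ : ∑ i, ∑ j, rtr (A i * (A j * A j)) * rtr (A i) = w * v * d := by
    calc _ = ∑ i, ∑ j, rtr ((rtr (A i) : ℂ) • A i * (A j * A j)) := by
            simp only [rtr_ofReal_smul_mul, mul_comm]
      _ = w * v * d := by rw [sum_sum_rtr_mul, hW, hV, hPP]
  have hβ₄ : ∑ i, ∑ j, rtr (A i * A i * (A j * A j)) = v * v * d := by
    rw [sum_sum_rtr_mul, hV, hPP]
  have hdiv : ∀ a b : ℝ, a * b * d = a * d * (b * d) / d := fun a b => by
    rcases eq_or_ne d 0 with rfl | hd0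
    · simp
    · field_simp
  rw [hβ₂, hβ₃, hβ₄, hα₁, hα₂, sq, sq, ← hdiv, ← hdiv, ← hdiv]
  exact ⟨rfl, rfl, rfl⟩
end

def shell (N K : ℕ) : Finset (Fin N → Fin 2) := {x | #{n | x n = 1} = K}

lemma shellP_eq_diagonal (N K : ℕ) :
    shellP N K = diagonal fun x => if x ∈ shell N K then 1 else 0 := by
  ext x y
  by_cases h : x = y
  · subst h; simp [shellP, shell]
  · simp [shellP, h]

lemma shellP_mul_self (N K : ℕ) : shellP N K * shellP N K = shellP N K := by
  rw [shellP_eq_diagonal, diagonal_indicator_mul_self]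

lemma card_shell (N K : ℕ) : #(shell N K) = N.choose K := by
  have hbit : ∀ b : Fin 2, (if b = 1 then 1 else 0) = b := by decide
  rw [show N.choose K = #(powersetCard K (univ : Finset (Fin N))) by simp]
  refine card_nbij' (fun x => ({n | x n = 1} : Finset (Fin N)))
    (fun s n => if n ∈ s then 1 else 0) ?_ ?_ ?_ ?_
  · intro x hx
    simpa [shell, mem_powersetCard] using hx
  · intro s hs
    simp_all [shell, mem_powersetCard]
  · intro x _
    funext n
    simp [hbit]
  · intro s _
    ext n
    simp

lemma comp_perm_mem_shell_iff {N K : ℕ} (σ : Equiv.Perm (Fin N)) (z : Fin N → Fin 2) :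
    z ∘ σ ∈ shell N K ↔ z ∈ shell N K := by
  suffices #{n | z (σ n) = 1} = #{n | z n = 1} by simp [shell, this]
  exact card_equiv σ (by simp)

lemma exists_perm_comp_eq_of_mem_shell {N K : ℕ} {x y : Fin N → Fin 2} (hx : x ∈ shell N K)
    (hy : y ∈ shell N K) : ∃ σ : Equiv.Perm (Fin N), x ∘ σ = y := by
  have hcard : ∀ b, Fintype.card {n // y n = b} = Fintype.card {n // x n = b} := by
    have h1 : Fintype.card {n // y n = 1} = Fintype.card {n // x n = 1} := by
      simp only [Fintype.card_subtype]
      exact (mem_filter.1 hy).2.trans (mem_filter.1 hx).2.symm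
    have hzero : ∀ b : Fin 2, b = 0 ↔ ¬ b = 1 := by decide
    intro b
    fin_cases b
    · simp only [Fin.zero_eta, hzero, Fintype.card_subtype_compl, h1]
    · exact h1
  exact ⟨Equiv.ofFiberEquiv fun b => Fintype.equivOfCardEq (hcard b),
    funext (Equiv.ofFiberEquiv_map _)⟩

lemma sum_shell_prod_comp_perm {R : Type*} [CommSemiring R] {N K : ℕ} (F : Fin 2 → Fin 2 → R)
    (x : Fin N → Fin 2) (σ : Equiv.Perm (Fin N)) :
    ∑ z ∈ shell N K, ∏ n, F (z n) (x (σ n)) = ∑ z ∈ shell N K, ∏ n, F (z n) (x n) := by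
  refine sum_nbij' (· ∘ σ.symm) (· ∘ σ) ?_ ?_ ?_ ?_ ?_
  · intro z hz; simpa [comp_perm_mem_shell_iff] using hz
  · intro z hz; simpa [comp_perm_mem_shell_iff] using hz
  · intro z _; simp [Function.comp_assoc]
  · intro z _; simp [Function.comp_assoc]
  · intro z _
    simpa using Equiv.prod_comp σ fun n => F (z (σ.symm n)) (x n)

lemma exists_sum_shell_prod_eq {R : Type*} [CommSemiring R] (N K : ℕ) (F : Fin 2 → Fin 2 → R) :
    ∃ c, ∀ x ∈ shell N K, ∑ z ∈ shell N K, ∏ n, F (z n) (x n) = c := by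
  rcases (shell N K).eq_empty_or_nonempty with h | ⟨x₀, hx₀⟩
  · exact ⟨0, by simp [h]⟩
  refine ⟨∑ z ∈ shell N K, ∏ n, F (z n) (x₀ n), fun x hx => ?_⟩
  obtain ⟨σ, rfl⟩ := exists_perm_comp_eq_of_mem_shell hx₀ hx
  exact sum_shell_prod_comp_perm F x₀ σ

lemma ofReal_sqrt_sq {x : ℝ} (hx : 0 ≤ x) : ((√x : ℝ) : ℂ) ^ 2 = x := by
  rw [← Complex.ofReal_pow, Real.sq_sqrt hx]

noncomputable def ampDiag (r : ℝ) : Fin 2 → ℝ := ![-1, 1 - 2 * r]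

lemma ofReal_re_ampQ_apply_self (r : ℝ) (a : Fin 4) (x : Fin 2) :
    ((ampQ r a x x).re : ℂ) = ampQ r a x x := by
  refine Complex.ext (by simp) ?_
  fin_cases a <;> fin_cases x <;>
    simp [ampQ, ampK1, ampK2, pauliR, Matrix.mul_apply, Fin.sum_univ_two]

section
variable {r : ℝ} (hr0 : 0 ≤ r) (hr1 : r ≤ 1)
include hr0 hr1

lemma ampQ_eq (a : Fin 4) :
    ampQ r a = ((√2 : ℝ) : ℂ)⁻¹ • ![1, !![0, (√(1 - r) : ℂ); (√(1 - r) : ℂ), 0],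
      !![0, Complex.I * (√(1 - r) : ℂ); -Complex.I * (√(1 - r) : ℂ), 0],
      diagonal fun x => (ampDiag r x : ℂ)] a := by
  fin_cases a <;> ext i j <;> fin_cases i <;> fin_cases j <;>
    simp [ampQ, ampK1, ampK2, pauliR, Matrix.mul_apply, Fin.sum_univ_two, ampDiag] <;>
    ring_nf <;> simp only [ofReal_sqrt_sq hr0, ofReal_sqrt_sq (sub_nonneg.2 hr1)] <;> push_cast <;>
    ring

lemma sum_ampQ_apply_self_mul (z x y : Fin 2) :
    ∑ a, ampQ r a z z * ampQ r a x y =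
      if x = y then (((1 + ampDiag r z * ampDiag r x) / 2 : ℝ) : ℂ) else 0 := by
  fin_cases z <;> fin_cases x <;> fin_cases y <;>
    simp [Fin.sum_univ_four, ampQ_eq hr0 hr1, ampDiag] <;>
    ring_nf <;> simp only [inv_pow, ofReal_sqrt_sq zero_le_two] <;> push_cast <;> ring

lemma sum_ampQ_mul_ampQ (x z y : Fin 2) :
    ∑ a, ampQ r a x z * ampQ r a z y =
      if x = y then ((if x = z then (1 + ampDiag r x ^ 2) / 2 else 1 - r : ℝ) : ℂ) else 0 := by
  fin_cases z <;> fin_cases x <;> fin_cases y <;>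
    simp [Fin.sum_univ_four, ampQ_eq hr0 hr1, ampDiag] <;>
    ring_nf <;> simp only [inv_pow, ofReal_sqrt_sq zero_le_two, Complex.I_sq,
      ofReal_sqrt_sq (sub_nonneg.2 hr1)] <;> push_cast <;> ring
end

lemma trace_ampR (r : ℝ) (N K : ℕ) (μ : Fin N → Fin 4) :
    trace (ampR r N K μ) = ∑ z ∈ shell N K, ∏ n, ampQ r (μ n) (z n) (z n) := by
  rw [ampR, shellP_eq_diagonal, trace_diagonal_indicator_mul_mul]
  rfl

lemma ofReal_rtr_ampR (r : ℝ) (N K : ℕ) (μ : Fin N → Fin 4) :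
    (rtr (ampR r N K μ) : ℂ) = trace (ampR r N K μ) := by
  have h : trace (ampR r N K μ) =
      ((∑ z ∈ shell N K, ∏ n, (ampQ r (μ n) (z n) (z n)).re : ℝ) : ℂ) := by
    push_cast
    simp_rw [ofReal_re_ampQ_apply_self]
    exact trace_ampR r N K μ
  rw [rtr, h, Complex.ofReal_re]

lemma sum_trace_ampR_smul_ampQN (r : ℝ) (N K : ℕ) :
    ∑ μ, trace (ampR r N K μ) • ampQN r N μ =
      of fun x y => ∑ z ∈ shell N K, ∏ n, ∑ a, ampQ r a (z n) (z n) * ampQ r a (x n) (y n) := by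
  ext x y
  simp only [Matrix.sum_apply, Matrix.smul_apply, smul_eq_mul, trace_ampR, ampQN, of_apply,
    sum_mul]
  rw [sum_comm]
  exact sum_congr rfl fun z _ =>
    sum_prod_mul_prod (fun n a => ampQ r a (z n) (z n)) fun n a => ampQ r a (x n) (y n)

lemma sum_ampQN_mul_shellP_mul_ampQN (r : ℝ) (N K : ℕ) :
    ∑ μ, ampQN r N μ * shellP N K * ampQN r N μ =
      of fun x y => ∑ z ∈ shell N K, ∏ n, ∑ a, ampQ r a (x n) (z n) * ampQ r a (z n) (y n) := by
  ext x y
  simp only [Matrix.sum_apply, shellP_eq_diagonal, mul_diagonal_indicator_mul_apply]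
  simp only [ampQN, of_apply]
  rw [sum_comm]
  exact sum_congr rfl fun z _ =>
    sum_prod_mul_prod (fun n a => ampQ r a (x n) (z n)) fun n a => ampQ r a (z n) (y n)

lemma exists_shellP_mul_of_mul_shellP (N K : ℕ) (F : Fin 2 → Fin 2 → ℝ) :
    ∃ c : ℝ, shellP N K *
      (of fun x y => ∑ z ∈ shell N K, ∏ n, if x n = y n then (F (z n) (x n) : ℂ) else 0) *
      shellP N K = (c : ℂ) • shellP N K := by
  obtain ⟨c, hc⟩ := exists_sum_shell_prod_eq N K F
  refine ⟨c, ?_⟩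
  rw [of_sum_prod_ite_eq_diagonal (shell N K) fun a b => (F a b : ℂ), shellP_eq_diagonal]
  exact diagonal_indicator_mul_diagonal_mul _ fun x hx => by rw [← hc x hx]; push_cast; rfl

section
variable {r : ℝ} (hr0 : 0 ≤ r) (hr1 : r ≤ 1)
include hr0 hr1

lemma exists_sum_trace_smul_ampR (N K : ℕ) :
    ∃ w : ℝ, ∑ μ, trace (ampR r N K μ) • ampR r N K μ = (w : ℂ) • shellP N K := by
  have hsum : ∑ μ, trace (ampR r N K μ) • ampR r N K μ =
      shellP N K * (∑ μ, trace (ampR r N K μ) • ampQN r N μ) * shellP N K := by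
    simp only [ampR, mul_sum, sum_mul, mul_smul_comm, smul_mul_assoc]
  rw [hsum, sum_trace_ampR_smul_ampQN]
  simp_rw [sum_ampQ_apply_self_mul hr0 hr1]
  exact exists_shellP_mul_of_mul_shellP N K fun z x => (1 + ampDiag r z * ampDiag r x) / 2

lemma exists_sum_ampR_mul_self (N K : ℕ) :
    ∃ v : ℝ, ∑ μ, ampR r N K μ * ampR r N K μ = (v : ℂ) • shellP N K := by
  have hsum : ∑ μ, ampR r N K μ * ampR r N K μ =
      shellP N K * (∑ μ, ampQN r N μ * shellP N K * ampQN r N μ) * shellP N K := by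
    have hPP : ∀ M, shellP N K * (shellP N K * M) = shellP N K * M := fun M => by
      rw [← Matrix.mul_assoc, shellP_mul_self]
    simp only [ampR, mul_sum, sum_mul, Matrix.mul_assoc, hPP]
  rw [hsum, sum_ampQN_mul_shellP_mul_ampQN]
  simp_rw [sum_ampQ_mul_ampQ hr0 hr1]
  exact exists_shellP_mul_of_mul_shellP N K
    fun z x => if x = z then (1 + ampDiag r x ^ 2) / 2 else 1 - r
end

theorem amp_beta_formulas_general (r : ℝ) (hr0 : 0 ≤ r) (hr1 : r ≤ 1)
    (N Kp : ℕ) :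
    (∑ μ : Fin N → Fin 4, ∑ ν : Fin N → Fin 4,
        rtr (ampR r N Kp μ * ampR r N Kp ν) * rtr (ampR r N Kp μ) * rtr (ampR r N Kp ν)) =
          (∑ μ : Fin N → Fin 4, (rtr (ampR r N Kp μ)) ^ 2) ^ 2 / (N.choose Kp : ℝ) ∧
      (∑ μ : Fin N → Fin 4, ∑ ν : Fin N → Fin 4,
        rtr (ampR r N Kp μ * (ampR r N Kp ν * ampR r N Kp ν)) * rtr (ampR r N Kp μ)) =
          (∑ μ : Fin N → Fin 4, (rtr (ampR r N Kp μ)) ^ 2) *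
            (∑ μ : Fin N → Fin 4, rtr (ampR r N Kp μ * ampR r N Kp μ)) / (N.choose Kp : ℝ) ∧
      (∑ μ : Fin N → Fin 4, ∑ ν : Fin N → Fin 4,
        rtr (ampR r N Kp μ * ampR r N Kp μ * (ampR r N Kp ν * ampR r N Kp ν))) =
          (∑ μ : Fin N → Fin 4, rtr (ampR r N Kp μ * ampR r N Kp μ)) ^ 2 / (N.choose Kp : ℝ) := by
  obtain ⟨w, hW⟩ := exists_sum_trace_smul_ampR hr0 hr1 N Kp
  obtain ⟨v, hV⟩ := exists_sum_ampR_mul_self hr0 hr1 N Kp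
  have hd : trace (shellP N Kp) = (N.choose Kp : ℝ) := by
    rw [shellP_eq_diagonal, trace_diagonal_indicator, card_shell]
    push_cast; rfl
  exact beta_formulas_of_sum_eq_smul (shellP_mul_self N Kp) hd (ofReal_rtr_ampR r N Kp) hW hV

/-- In the amplitude-damping setup, β₂ = α₁²/d_S, β₃ = α₁α₂/d_S and β₄ = α₂²/d_S,
where d_S = C(N,K). -/
theorem amp_beta_formulas (r : ℝ) (hr0 : 0 ≤ r) (hr1 : r ≤ 1)
    (N Kp : ℕ) (hN : 1 ≤ N) (hK : Kp ≤ N) :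
    (∑ μ : Fin N → Fin 4, ∑ ν : Fin N → Fin 4,
        rtr (ampR r N Kp μ * ampR r N Kp ν) * rtr (ampR r N Kp μ) * rtr (ampR r N Kp ν)) =
          (∑ μ : Fin N → Fin 4, (rtr (ampR r N Kp μ)) ^ 2) ^ 2 / (N.choose Kp : ℝ) ∧
      (∑ μ : Fin N → Fin 4, ∑ ν : Fin N → Fin 4,
        rtr (ampR r N Kp μ * (ampR r N Kp ν * ampR r N Kp ν)) * rtr (ampR r N Kp μ)) =
          (∑ μ : Fin N → Fin 4, (rtr (ampR r N Kp μ)) ^ 2) *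
            (∑ μ : Fin N → Fin 4, rtr (ampR r N Kp μ * ampR r N Kp μ)) / (N.choose Kp : ℝ) ∧
      (∑ μ : Fin N → Fin 4, ∑ ν : Fin N → Fin 4,
        rtr (ampR r N Kp μ * ampR r N Kp μ * (ampR r N Kp ν * ampR r N Kp ν))) =
          (∑ μ : Fin N → Fin 4, rtr (ampR r N Kp μ * ampR r N Kp μ)) ^ 2 / (N.choose Kp : ℝ) :=
  amp_beta_formulas_general r hr0 hr1 N Kp
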